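/- arXiv:2212.07870 — 3 statements merged into one kernel-verified Lean document; each statement's English description precedes it below -/
import Mathlib

section
/- If G is a DAG in the class S_k (μ_s(v) ≤ k for every vertex v), then G is a k-funnel: every source-to-sink path contains an edge e with μ(e) ≤ k. -/
open List

section Defs

variable {V : Type*} {α : Type*}

/-- A border of `t` is a proper prefix of `t` that is also a proper suffix of `t`. -/
def IsBorder (b t : List α) : Prop :=
  b <+: t ∧ b <:+ t ∧ b.length < t.length

/-- A directed graph (edge relation) is acyclic. -/
def Acyclic (E : V → V → Prop) : Prop :=
  ∀ v, ¬ Relation.TransGen E v v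

def IsSource (E : V → V → Prop) (v : V) : Prop := ∀ u, ¬ E u v

def IsSink (E : V → V → Prop) (v : V) : Prop := ∀ w, ¬ E v w

/-- A path is a nonempty list of vertices with consecutive edges. -/
def IsPath (E : V → V → Prop) (p : List V) : Prop := p ≠ [] ∧ p.Chain' E

/-- The edge `(u,v)` occurs (as a consecutive pair) on the path `p`. -/
def EdgeOn (p : List V) (u v : V) : Prop := ∃ l₁ l₂, p = l₁ ++ u :: v :: l₂

/-- A source-to-sink path. -/
def SrcSinkPath (E : V → V → Prop) (p : List V) : Prop :=
  IsPath E p ∧ (∃ s, p.head? = some s ∧ IsSource E s) ∧ ∃ t, p.getLast? = some t ∧ IsSink E t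

/-- `μ_s(v)`: the number of source-to-`v` paths. -/
noncomputable def muS (E : V → V → Prop) (v : V) : ℕ :=
  Set.ncard {p : List V | IsPath E p ∧ (∃ s, p.head? = some s ∧ IsSource E s) ∧ p.getLast? = some v}

/-- `μ_t(v)`: the number of `v`-to-sink paths. -/
noncomputable def muT (E : V → V → Prop) (v : V) : ℕ :=
  Set.ncard {p : List V | IsPath E p ∧ p.head? = some v ∧ ∃ t, p.getLast? = some t ∧ IsSink E t}

/-- `μ(e)` for `e = (u,v)`: the number of source-to-sink paths containing the edge `(u,v)`. -/
noncomputable def muE (E : V → V → Prop) (u v : V) : ℕ :=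
  Set.ncard {p : List V | SrcSinkPath E p ∧ EdgeOn p u v}

def NoIsolated (E : V → V → Prop) : Prop := ∀ v : V, (∃ u, E u v) ∨ ∃ w, E v w

/-- `G` is a `k`-funnel: every source-to-sink path contains a `k`-private edge. -/
def KFunnel (E : V → V → Prop) (k : ℕ) : Prop :=
  ∀ p, SrcSinkPath E p → ∃ u v, EdgeOn p u v ∧ muE E u v ≤ k

/-- `G` is a funnel: every source-to-sink path contains a private edge. -/
def Funnel (E : V → V → Prop) : Prop :=
  ∀ p, SrcSinkPath E p → ∃ u v, EdgeOn p u v ∧ muE E u v = 1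

/-- `B_v`: the set of lengths `i` such that some path ending at `v` spells `S[1..i]`
(with `0` included for the empty path). -/
def MatchSet (E : V → V → Prop) (ℓ : V → α) (S : List α) (v : V) : Set ℕ :=
  {i | i ≤ S.length ∧ (i = 0 ∨ ∃ p, IsPath E p ∧ p.getLast? = some v ∧ p.map ℓ = S.take i)}

end Defs

/-!
The last edge `(u, t)` of a source-to-sink path is `k`-private: since `t` is a sink, every
source-to-sink path through `(u, t)` ends at `t`, so `μ(u, t) ≤ μ_s(t) ≤ k`. Since `Set.ncard` of an
infinite set is `0`, the first inequality needs the paths to be finite in number: in a finite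
acyclic graph they have no repeated vertices.
-/

section Paths

variable {V : Type*} {E : V → V → Prop}

theorem Acyclic.nodup_of_isChain (hE : Acyclic E) {p : List V} (hp : p.IsChain E) :
    p.Nodup := by
  have hpw : p.Pairwise (Relation.TransGen E) :=
    List.isChain_iff_pairwise.mp (hp.imp fun _ _ => .single)
  exact hpw.imp (S := (· ≠ ·)) fun hab heq => hE _ (heq ▸ hab)

theorem Acyclic.finite_setOf_isPath [Fintype V] (hE : Acyclic E) : {p | IsPath E p}.Finite :=
  (List.finite_length_le V (Fintype.card V)).subset fun _ hp =>
    (hE.nodup_of_isChain hp.2).length_le_card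

theorem SrcSinkPath.exists_eq_append_pair (hni : NoIsolated E) {p : List V}
    (hp : SrcSinkPath E p) : ∃ q u t, p = q ++ [u, t] ∧ IsSink E t := by
  obtain ⟨⟨hne, -⟩, ⟨s, hs, hsrc⟩, t₀, ht₀, hsink⟩ := hp
  rcases p.eq_nil_or_concat with rfl | ⟨q, t, rfl⟩
  · exact absurd rfl hne
  obtain rfl : t = t₀ := by simpa using ht₀
  rcases q.eq_nil_or_concat with rfl | ⟨q', u, rfl⟩
  · obtain rfl : t = s := by simpa using hs
    rcases hni t with ⟨u, hu⟩ | ⟨w, hw⟩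
    · exact absurd hu (hsrc u)
    · exact absurd hw (hsink w)
  · exact ⟨q', u, t, by simp, hsink⟩

theorem EdgeOn.getLast?_eq_of_isSink {p : List V} {u t : V} (he : EdgeOn p u t)
    (hp : p.IsChain E) (ht : IsSink E t) : p.getLast? = some t := by
  obtain ⟨l₁, l₂, rfl⟩ := he
  cases l₂ with
  | nil => simp
  | cons w l₂ =>
    have htw := (hp.suffix ⟨l₁, rfl⟩ : (u :: t :: w :: l₂).IsChain E)
    rw [List.isChain_cons_cons, List.isChain_cons_cons] at htw
    exact absurd htw.2.1 (ht w)

theorem muE_le_muS_of_isSink [Fintype V] (hE : Acyclic E) {u t : V} (ht : IsSink E t) :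
    muE E u t ≤ muS E t := by
  refine Set.ncard_le_ncard ?_ (hE.finite_setOf_isPath.subset fun _ hp => hp.1)
  rintro p ⟨⟨hpath, hsrc, -⟩, he⟩
  exact ⟨hpath, hsrc, he.getLast?_eq_of_isSink hpath.2 ht⟩

end Paths

/-- If `μ_s(v) ≤ k` for every vertex (class `S_k`), then `G` is a `k`-funnel. -/
theorem stmt9 {V : Type*} [Fintype V] (E : V → V → Prop) (hE : Acyclic E)
    (hni : NoIsolated E) (k : ℕ) (h : ∀ v, muS E v ≤ k) :
    KFunnel E k := by
  intro p hp
  obtain ⟨q, u, t, rfl, ht⟩ := hp.exists_eq_append_pair hni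
  exact ⟨u, t, ⟨q, [], rfl⟩, (muE_le_muS_of_isSink hE ht).trans (h t)⟩
end

section
/- Every k-funnel is in the class ST_k: if every source-to-sink path of a DAG G contains an edge e with μ(e) ≤ k, then every vertex v satisfies μ_s(v) ≤ k or μ_t(v) ≤ k. -/
open List

/-!
Glue a source-to-`v` path `p` and a `v`-to-sink path `q` at `v`. The funnel property gives an
edge `e` with `μ(e) ≤ k` on the glued path, lying on `p` or on `q`. If it lies on `p`, then
gluing `p` to every `v`-to-sink path injects those paths into the source-to-sink paths through
`e`, so `μ_t(v) ≤ μ(e) ≤ k`; symmetrically, `μ_s(v) ≤ k` if it lies on `q`. Acyclicity and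
finiteness make all path sets finite and guarantee that `p` and `q` exist.
-/

section Paths

variable {V : Type*} {E : V → V → Prop}

def srcPathsTo (E : V → V → Prop) (v : V) : Set (List V) :=
  {p | IsPath E p ∧ (∃ s, p.head? = some s ∧ IsSource E s) ∧ p.getLast? = some v}

def sinkPathsFrom (E : V → V → Prop) (v : V) : Set (List V) :=
  {p | IsPath E p ∧ p.head? = some v ∧ ∃ t, p.getLast? = some t ∧ IsSink E t}

namespace Acyclic

theorem nodup (hE : Acyclic E) {p : List V} (hp : p.IsChain E) : p.Nodup := by
  have : p.Pairwise (Relation.TransGen E) :=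
    isChain_iff_pairwise.1 (hp.imp fun _ _ => Relation.TransGen.single)
  exact this.imp (S := (· ≠ ·)) fun h heq => hE _ (heq ▸ h)

theorem finite_setOf_isChain [Finite V] (hE : Acyclic E) : {p : List V | p.IsChain E}.Finite := by
  have := Fintype.ofFinite V
  exact (finite_length_le V (Fintype.card V)).subset fun _ hp => (hE.nodup hp).length_le_card

theorem wellFounded [Finite V] (hE : Acyclic E) : WellFounded E :=
  have : Std.Irrefl (Relation.TransGen E) := ⟨hE⟩
  Subrelation.wf Relation.TransGen.single (Finite.wellFounded_of_trans_of_irrefl _)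

theorem swap (hE : Acyclic E) : Acyclic (Function.swap E) :=
  fun v h => hE v (Relation.transGen_swap.1 h)

end Acyclic

theorem IsPath.append_tail {p q : List V} {v : V} (hp : IsPath E p) (hq : IsPath E q)
    (hpv : p.getLast? = some v) (hqv : q.head? = some v) : IsPath E (p ++ q.tail) := by
  obtain ⟨p', rfl⟩ := getLast?_eq_some_iff.1 hpv
  obtain ⟨q', rfl⟩ := head?_eq_some_iff.1 hqv
  rw [tail_cons, append_assoc, singleton_append]
  exact ⟨by simp, isChain_split.2 ⟨hp.2, hq.2⟩⟩

theorem srcSinkPath_append_tail {p q : List V} {v : V} (hp : p ∈ srcPathsTo E v)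
    (hq : q ∈ sinkPathsFrom E v) : SrcSinkPath E (p ++ q.tail) := by
  obtain ⟨hpath, ⟨s, hps, hs⟩, hpv⟩ := hp
  obtain ⟨hqpath, hqv, t, hqt, ht⟩ := hq
  refine ⟨hpath.append_tail hqpath hpv hqv, ⟨s, ?_, hs⟩, ⟨t, ?_, ht⟩⟩
  · rwa [head?_append_of_ne_nil _ hpath.1]
  · obtain ⟨q', rfl⟩ := head?_eq_some_iff.1 hqv
    cases q' <;> simp_all

theorem Acyclic.nonempty_srcPathsTo [Finite V] (hE : Acyclic E) (v : V) :
    (srcPathsTo E v).Nonempty := by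
  induction v using hE.wellFounded.induction with
  | _ v ih =>
    by_cases hv : IsSource E v
    · exact ⟨[v], ⟨by simp, .singleton v⟩, ⟨v, rfl, hv⟩, rfl⟩
    · obtain ⟨u, hu⟩ : ∃ u, E u v := by simpa [IsSource] using hv
      obtain ⟨p, hpath, ⟨s, hps, hs⟩, hpu⟩ := ih u hu
      have hedge : IsPath E [u, v] := ⟨by simp, .cons_cons hu (.singleton v)⟩
      exact ⟨p ++ [v], hpath.append_tail hedge hpu rfl,
        ⟨s, by rwa [head?_append_of_ne_nil _ hpath.1], hs⟩, by simp⟩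

theorem Acyclic.nonempty_sinkPathsFrom [Finite V] (hE : Acyclic E) (v : V) :
    (sinkPathsFrom E v).Nonempty := by
  obtain ⟨p, ⟨hne, hchain⟩, hsrc, hpv⟩ := hE.swap.nonempty_srcPathsTo v
  exact ⟨p.reverse, ⟨by simpa using hne, isChain_reverse.2 hchain⟩, by simpa using hpv,
    by simpa [IsSource, IsSink] using hsrc⟩

theorem edgeOn_cons_iff {x u w : V} {p : List V} :
    EdgeOn (x :: p) u w ↔ (x = u ∧ p.head? = some w) ∨ EdgeOn p u w := by
  constructor
  · rintro ⟨_ | ⟨y, l₁⟩, l₂, h⟩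
    · simp_all
    · exact .inr ⟨l₁, l₂, (cons.inj h).2⟩
  · rintro (⟨rfl, h⟩ | ⟨l₁, l₂, rfl⟩)
    · obtain ⟨p', rfl⟩ := head?_eq_some_iff.1 h
      exact ⟨[], p', rfl⟩
    · exact ⟨x :: l₁, l₂, rfl⟩

theorem EdgeOn.append_left {p : List V} {u w : V} (l : List V) (h : EdgeOn p u w) :
    EdgeOn (l ++ p) u w := by
  obtain ⟨l₁, l₂, rfl⟩ := h
  exact ⟨l ++ l₁, l₂, by simp⟩

theorem EdgeOn.append_right {p : List V} {u w : V} (l : List V) (h : EdgeOn p u w) :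
    EdgeOn (p ++ l) u w := by
  obtain ⟨l₁, l₂, rfl⟩ := h
  exact ⟨l₁, l₂ ++ l, by simp⟩

theorem EdgeOn.of_append_cons {l₁ l₂ : List V} {v u w : V} (h : EdgeOn (l₁ ++ v :: l₂) u w) :
    EdgeOn (l₁ ++ [v]) u w ∨ EdgeOn (v :: l₂) u w := by
  induction l₁ with
  | nil => exact .inr h
  | cons x l₁ ih =>
    rw [cons_append, edgeOn_cons_iff] at h
    rcases h with ⟨rfl, hw⟩ | h
    · left
      rw [cons_append, edgeOn_cons_iff]
      left
      cases l₁ <;> simp_all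
    · exact (ih h).imp_left fun h' => by rw [cons_append, edgeOn_cons_iff]; exact .inr h'

theorem append_tail_eq_dropLast_append {p q : List V} {v : V} (hp : p.getLast? = some v)
    (hq : q.head? = some v) : p ++ q.tail = p.dropLast ++ q := by
  obtain ⟨p', rfl⟩ := getLast?_eq_some_iff.1 hp
  obtain ⟨q', rfl⟩ := head?_eq_some_iff.1 hq
  simp

theorem EdgeOn.of_append_tail {p q : List V} {v u w : V} (hp : p.getLast? = some v)
    (hq : q.head? = some v) (h : EdgeOn (p ++ q.tail) u w) : EdgeOn p u w ∨ EdgeOn q u w := by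
  obtain ⟨p', rfl⟩ := getLast?_eq_some_iff.1 hp
  obtain ⟨q', rfl⟩ := head?_eq_some_iff.1 hq
  exact EdgeOn.of_append_cons (by simpa using h)

theorem muT_le_muE [Finite V] (hE : Acyclic E) {p : List V} {v u w : V}
    (hp : p ∈ srcPathsTo E v) (he : EdgeOn p u w) : muT E v ≤ muE E u w := by
  refine Set.ncard_le_ncard_of_injOn (fun q => p ++ q.tail)
    (fun q hq => ⟨srcSinkPath_append_tail hp hq, he.append_right _⟩) ?_
    (hE.finite_setOf_isChain.subset fun _ hr => hr.1.1.2)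
  intro q₁ hq₁ q₂ hq₂ h
  rw [eq_cons_of_mem_head? hq₁.2.1, eq_cons_of_mem_head? hq₂.2.1, append_cancel_left h]

theorem muS_le_muE [Finite V] (hE : Acyclic E) {q : List V} {v u w : V}
    (hq : q ∈ sinkPathsFrom E v) (he : EdgeOn q u w) : muS E v ≤ muE E u w := by
  refine Set.ncard_le_ncard_of_injOn (fun p => p ++ q.tail)
    (fun p hp => ⟨srcSinkPath_append_tail hp hq, ?_⟩)
    (fun _ _ _ _ h => append_cancel_right h)
    (hE.finite_setOf_isChain.subset fun _ hr => hr.1.1.2)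
  rw [append_tail_eq_dropLast_append hp.2.2 hq.2.1]
  exact he.append_left _

end Paths

theorem stmt11_general {V : Type*} [Fintype V] (E : V → V → Prop) (hE : Acyclic E)
    (k : ℕ) (h : KFunnel E k) :
    ∀ v, muS E v ≤ k ∨ muT E v ≤ k := by
  intro v
  obtain ⟨p, hp⟩ := hE.nonempty_srcPathsTo v
  obtain ⟨q, hq⟩ := hE.nonempty_sinkPathsFrom v
  obtain ⟨u, w, he, hk⟩ := h _ (srcSinkPath_append_tail hp hq)
  rcases EdgeOn.of_append_tail hp.2.2 hq.2.1 he with hpe | hqe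
  · exact .inr ((muT_le_muE hE hp hpe).trans hk)
  · exact .inl ((muS_le_muE hE hq hqe).trans hk)

/-- Every `k`-funnel is in `ST_k`: each vertex has `μ_s(v) ≤ k` or `μ_t(v) ≤ k`. -/
theorem stmt11 {V : Type*} [Fintype V] (E : V → V → Prop) (hE : Acyclic E)
    (hni : NoIsolated E) (k : ℕ) (h : KFunnel E k) :
    ∀ v, muS E v ≤ k ∨ muT E v ≤ k :=
  stmt11_general E hE k h
end

section
/- Let P_sv be any source-to-v path in a labeled DAG and let B_P = {i : some suffix of P_sv spells S[1..i]}. Then for any i < j in B_P, S[1..i] is a border of S[1..j]; consequently a prefix-incomparable set contains at most one element of B_P. -/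
open List

/-! Two suffixes of the same path are nested, so the shorter one spells a suffix of the word
spelled by the longer one; for prefixes of `S` this is exactly the border relation. -/

theorem isBorder_take_of_isSuffix {α : Type*} {S : List α} {i j : ℕ} (hij : i < j)
    (hj : j ≤ S.length) (h : S.take i <:+ S.take j) : IsBorder (S.take i) (S.take j) :=
  ⟨take_prefix_take_left hij.le, h, by simp only [length_take]; omega⟩

theorem isBorder_of_map_isSuffix {V α : Type*} {ℓ : V → α} {S : List α} {P p q : List V}
    {i j : ℕ} (hij : i < j) (hj : j ≤ S.length) (hp : p <:+ P) (hq : q <:+ P)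
    (hpS : p.map ℓ = S.take i) (hqS : q.map ℓ = S.take j) :
    IsBorder (S.take i) (S.take j) := by
  have hlen : p.length ≤ q.length := by
    have hpl := congrArg length hpS
    have hql := congrArg length hqS
    simp only [length_map, length_take] at hpl hql
    omega
  refine isBorder_take_of_isSuffix hij hj ?_
  rw [← hpS, ← hqS]
  exact (suffix_of_suffix_length_le hp hq hlen).map ℓ

theorem Set.subsingleton_inter_of_forall_lt {β : Type*} [LinearOrder β] {R : β → β → Prop}
    {s t : Set β} (hs : ∀ i ∈ s, ∀ j ∈ s, i < j → R i j)
    (ht : ∀ i ∈ t, ∀ j ∈ t, i < j → ¬ R i j) : (t ∩ s).Subsingleton := by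
  intro x ⟨hxt, hxs⟩ y ⟨hyt, hys⟩
  by_contra hne
  rcases lt_or_gt_of_ne hne with h | h
  · exact ht x hxt y hyt h (hs x hxs y hys h)
  · exact ht y hyt x hxt h (hs y hys x hxs h)

theorem stmt19_general {V α : Type*} (ℓ : V → α)
    (S : List α) (P : List V)
    (BP : Set ℕ) (hBP : BP = {i | i ≤ S.length ∧ ∃ p, p <:+ P ∧ p.map ℓ = S.take i}) :
    (∀ i ∈ BP, ∀ j ∈ BP, i < j → IsBorder (S.take i) (S.take j)) ∧
    ∀ B : Set ℕ, (∀ i ∈ B, ∀ j ∈ B, i < j → ¬ IsBorder (S.take i) (S.take j)) →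
      (B ∩ BP).Subsingleton := by
  have hborder : ∀ i ∈ BP, ∀ j ∈ BP, i < j → IsBorder (S.take i) (S.take j) := by
    subst hBP
    rintro i ⟨-, p, hp, hpS⟩ j ⟨hj, q, hq, hqS⟩ hij
    exact isBorder_of_map_isSuffix hij hj hp hq hpS hqS
  exact ⟨hborder, fun _ hB => Set.subsingleton_inter_of_forall_lt hborder hB⟩

/-- For a source-to-`v` path `P`, any two prefix lengths spelled by suffixes of
`P` are border-comparable; hence a prefix-incomparable set meets `B_P` at most
once. -/
theorem stmt19 {V α : Type*} (E : V → V → Prop) (hE : Acyclic E) (ℓ : V → α)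
    (S : List α) (P : List V) (v : V) (hP : IsPath E P)
    (hPsrc : ∃ s, P.head? = some s ∧ IsSource E s) (hPend : P.getLast? = some v)
    (BP : Set ℕ) (hBP : BP = {i | i ≤ S.length ∧ ∃ p, p <:+ P ∧ p.map ℓ = S.take i}) :
    (∀ i ∈ BP, ∀ j ∈ BP, i < j → IsBorder (S.take i) (S.take j)) ∧
    ∀ B : Set ℕ, (∀ i ∈ B, ∀ j ∈ B, i < j → ¬ IsBorder (S.take i) (S.take j)) →
      (B ∩ BP).Subsingleton :=
  stmt19_general ℓ S P BP hBP
end
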